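/- arXiv:1906.06647 — 2 statements merged into one kernel-verified Lean document; each statement's English description precedes it below -/
import Mathlib

section
/- Let p > 1 and let f, g : Ω → ℝ≥0 be measurable functions on a measure space (Ω, μ) with ∫ f^p dμ < ∞ and ∫ g^p dμ < ∞. If ∫ |u|^p f dμ ≤ p ∫ |u|^{p-1} g dμ for some measurable u with ∫|u|^p f dμ < ∞, and g^p / f^{p-1} is integrable (with the convention 0/0 = 0), then ∫ |u|^p f dμ ≤ p^p ∫ (g^p / f^{p-1}) dμ. -/
open MeasureTheory ENNReal

/-- The Hölder absorption step of the divergence-theorem Hardy method. -/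
theorem stmt_1 {Ω : Type*} [MeasurableSpace Ω] (μ : Measure Ω) (p : ℝ) (hp : 1 < p)
    (f g : Ω → ℝ≥0∞) (u : Ω → ℝ)
    (hf : Measurable f) (hg : Measurable g) (hu : Measurable u)
    (hfp : ∫⁻ x, (f x) ^ p ∂μ < ⊤)
    (hgp : ∫⁻ x, (g x) ^ p ∂μ < ⊤)
    (hufin : ∫⁻ x, ENNReal.ofReal (|u x| ^ p) * f x ∂μ < ⊤)
    (hineq : ∫⁻ x, ENNReal.ofReal (|u x| ^ p) * f x ∂μ
        ≤ ENNReal.ofReal p * ∫⁻ x, ENNReal.ofReal (|u x| ^ (p - 1)) * g x ∂μ)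
    (hint : ∫⁻ x, (g x) ^ p / (f x) ^ (p - 1) ∂μ < ⊤) :
    ∫⁻ x, ENNReal.ofReal (|u x| ^ p) * f x ∂μ
      ≤ ENNReal.ofReal (p ^ p) * ∫⁻ x, (g x) ^ p / (f x) ^ (p - 1) ∂μ := by
  have hp0 : (0:ℝ) < p := lt_trans one_pos hp
  have hp1 : (0:ℝ) < p - 1 := sub_pos.mpr hp
  set I := ∫⁻ x, ENNReal.ofReal (|u x| ^ p) * f x ∂μ with hIdef
  set J := ∫⁻ x, (g x) ^ p / (f x) ^ (p - 1) ∂μ with hJdef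
  have hr0 : (0:ℝ) < (p - 1) / p := div_pos hp1 hp0
  have hpq : Real.HolderConjugate (p / (p - 1)) p :=
    (Real.HolderConjugate.conjExponent hp).symm
  -- a.e. f finite
  have hfae : ∀ᵐ x ∂μ, f x ≠ ∞ := by
    filter_upwards [ae_lt_top (hf.pow_const p) hfp.ne] with x hx
    intro h
    rw [h, ENNReal.top_rpow_of_pos hp0] at hx
    exact lt_irrefl _ hx
  -- a.e. f = 0 → g = 0
  have hfg : ∀ᵐ x ∂μ, f x = 0 → g x = 0 := by
    filter_upwards [ae_lt_top ((hg.pow_const p).div (hf.pow_const (p-1))) hint.ne]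
      with x hx hfx
    by_contra hgx
    rw [Pi.div_apply, hfx, ENNReal.zero_rpow_of_pos hp1, ENNReal.div_zero] at hx
    · exact lt_irrefl _ hx
    · simp [ENNReal.rpow_eq_zero_iff, hgx, hp0, hp0.not_gt]
  -- the two factors for Hölder
  set a : Ω → ℝ≥0∞ := fun x => ENNReal.ofReal (|u x| ^ (p - 1)) * (f x) ^ ((p - 1) / p)
    with ha_def
  set b : Ω → ℝ≥0∞ := fun x => g x / (f x) ^ ((p - 1) / p) with hb_def
  have hab : ∀ᵐ x ∂μ, (a * b) x = ENNReal.ofReal (|u x| ^ (p - 1)) * g x := by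
    filter_upwards [hfae, hfg] with x hxfin hximp
    simp only [ha_def, hb_def, Pi.mul_apply]
    rcases eq_or_ne (f x) 0 with h0 | h0
    · rw [h0, hximp h0]; simp
    · have hne : (f x) ^ ((p - 1) / p) ≠ 0 := by
        simp [ENNReal.rpow_eq_zero_iff, h0, hxfin, hr0.not_gt]
      have hnt : (f x) ^ ((p - 1) / p) ≠ ∞ := by
        simp [ENNReal.rpow_eq_top_iff, h0, hxfin, hr0.not_gt]
      rw [mul_assoc, mul_comm ((f x) ^ ((p - 1) / p)), ENNReal.div_mul_cancel hne hnt]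
  -- compute the powers
  have ha_pow : ∀ x, a x ^ (p / (p - 1)) = ENNReal.ofReal (|u x| ^ p) * f x := by
    intro x
    have hexp1 : (p - 1) * (p / (p - 1)) = p := by field_simp
    have hexp2 : (p - 1) / p * (p / (p - 1)) = 1 := by field_simp
    rw [ha_def]
    rw [ENNReal.mul_rpow_of_nonneg _ _ (div_pos hp0 hp1).le,
      ENNReal.ofReal_rpow_of_nonneg (by positivity) (div_pos hp0 hp1).le,
      ← ENNReal.rpow_mul, ← Real.rpow_mul (abs_nonneg _), hexp1, hexp2,
      ENNReal.rpow_one]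
  have hb_pow : ∀ x, b x ^ p = (g x) ^ p / (f x) ^ (p - 1) := by
    intro x
    have hexp3 : (p - 1) / p * p = p - 1 := by field_simp
    rw [hb_def]
    rw [ENNReal.div_rpow_of_nonneg _ _ hp0.le, ← ENNReal.rpow_mul, hexp3]
  -- Hölder
  have holder : ∫⁻ x, ENNReal.ofReal (|u x| ^ (p - 1)) * g x ∂μ
      ≤ I ^ ((p - 1) / p) * J ^ (1 / p) := by
    have H := ENNReal.lintegral_mul_le_Lp_mul_Lq μ hpq (f := a) (g := b)
      (((hu.abs.pow_const _).ennreal_ofReal.mul (hf.pow_const _)).aemeasurable)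
      ((hg.div (hf.pow_const _)).aemeasurable)
    rw [lintegral_congr_ae hab] at H
    simp only [ha_pow, hb_pow] at H
    have hinv : 1 / (p / (p - 1)) = (p - 1) / p := by rw [one_div, inv_div]
    rw [hinv] at H
    exact H
  -- combine
  have key : I ≤ ENNReal.ofReal p * (I ^ ((p - 1) / p) * J ^ (1 / p)) :=
    hineq.trans (mul_le_mul_right holder _)
  rcases eq_or_ne I 0 with hI0 | hI0
  · rw [hI0]; exact zero_le
  have hItop : I ≠ ∞ := hufin.ne
  have hIsplit : I = I ^ ((p - 1) / p) * I ^ (1 / p) := by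
    rw [← ENNReal.rpow_add _ _ hI0 hItop]
    have : (p - 1) / p + 1 / p = 1 := by field_simp; ring
    rw [this, ENNReal.rpow_one]
  have hcan0 : I ^ ((p - 1) / p) ≠ 0 := by
    simp [ENNReal.rpow_eq_zero_iff, hI0, hItop, hr0.not_gt]
  have hcant : I ^ ((p - 1) / p) ≠ ∞ := by
    simp [ENNReal.rpow_eq_top_iff, hI0, hItop, hr0.not_gt]
  have step : I ^ (1 / p) ≤ ENNReal.ofReal p * J ^ (1 / p) := by
    rw [← ENNReal.mul_le_mul_iff_right hcan0 hcant, ← hIsplit]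
    calc I ≤ ENNReal.ofReal p * (I ^ ((p - 1) / p) * J ^ (1 / p)) := key
      _ = I ^ ((p - 1) / p) * (ENNReal.ofReal p * J ^ (1 / p)) := by ring
  calc I = (I ^ (1 / p)) ^ p := by
        rw [← ENNReal.rpow_mul, one_div_mul_cancel hp0.ne', ENNReal.rpow_one]
    _ ≤ (ENNReal.ofReal p * J ^ (1 / p)) ^ p := ENNReal.rpow_le_rpow step hp0.le
    _ = ENNReal.ofReal (p ^ p) * J := by
        rw [ENNReal.mul_rpow_of_nonneg _ _ hp0.le,
          ENNReal.ofReal_rpow_of_nonneg hp0.le hp0.le, ← ENNReal.rpow_mul,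
          one_div_mul_cancel hp0.ne', ENNReal.rpow_one]
end

section
/- Let n ≥ 2, p > 1, β ∈ ℝ with β < -n and p + β > -n, and s ∈ (0,1). For δ ∈ (0,1) set c(δ) = (|n+β| + δ)/p and define v : ℝ^n → ℝ by v(x) = (|x|/s)^{c(δ)} for |x| ≤ s and v(x) = (|x|/s)^{-c(δ/2)} for |x| > s. Then ∫_{ℝ^n} |x|^β |v(x)|^p dx < ∞, ∫_{ℝ^n} |x|^{β+p} |∇v(x)|^p dx < ∞ (with ∇v understood a.e.), and c(δ)^p ∫_{ℝ^n} |x|^β |v|^p dx > ∫_{ℝ^n} |x|^{β+p} |∇v|^p dx. -/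
open Set MeasureTheory Measure Real

section Aux

lemma integrable_fun_norm_of_radial {E : Type*} [NormedAddCommGroup E] [NormedSpace ℝ E]
    [MeasurableSpace E] [BorelSpace E] [FiniteDimensional ℝ E] [Nontrivial E]
    (μ : Measure E) [μ.IsAddHaarMeasure] {f : ℝ → ℝ}
    (hf : IntegrableOn (fun y => y ^ (Module.finrank ℝ E - 1) * f y) (Ioi 0)) :
    Integrable (fun x => f ‖x‖) μ := by
  set m := Module.finrank ℝ E - 1 with hmdef
  have hemb : MeasurableEmbedding (Subtype.val : Ioi (0:ℝ) → ℝ) :=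
    MeasurableEmbedding.subtype_coe measurableSet_Ioi
  have h1 : Integrable (fun y : Ioi (0:ℝ) => (y:ℝ) ^ m * f y)
      (volume.comap (Subtype.val : Ioi (0:ℝ) → ℝ)) := by
    have := hemb.integrable_map_iff
      (g := fun y : ℝ => y ^ m * f y) (μ := volume.comap (Subtype.val : Ioi (0:ℝ) → ℝ))
    rw [hemb.map_comap, Subtype.range_coe] at this
    exact this.1 hf
  have h2 : Integrable (fun y : Ioi (0:ℝ) => f y) (volumeIoiPow m) := by
    rw [Measure.volumeIoiPow, integrable_withDensity_iff_integrable_smul'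
      (by exact (measurable_subtype_coe.pow_const _).ennreal_ofReal)
      (Filter.Eventually.of_forall fun y => ENNReal.ofReal_lt_top)]
    refine h1.congr (Filter.Eventually.of_forall fun y => ?_)
    have : (0:ℝ) ≤ (y:ℝ) ^ m := pow_nonneg y.2.out.le _
    simp [ENNReal.toReal_ofReal this, smul_eq_mul]
  have h3 : Integrable (fun p : Metric.sphere (0:E) 1 × Ioi (0:ℝ) => f p.2)
      ((μ.toSphere).prod (volumeIoiPow m)) := by
    have := (integrable_const (1:ℝ) (μ := μ.toSphere)).mul_prod h2
    simpa using this
  have h4 : Integrable (fun x : ({0}ᶜ : Set E) => f ‖(x:E)‖)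
      (μ.comap (Subtype.val : ({0}ᶜ : Set E) → E)) := by
    have := (μ.measurePreserving_homeomorphUnitSphereProd).integrable_comp_emb
      (Homeomorph.measurableEmbedding _) (g := fun p : Metric.sphere (0:E) 1 × Ioi (0:ℝ) => f p.2)
    exact (this.2 h3).congr (Filter.Eventually.of_forall fun x => by
      simp [homeomorphUnitSphereProd, homeomorphSphereProd])
  have hemb2 : MeasurableEmbedding (Subtype.val : ({0}ᶜ : Set E) → E) :=
    MeasurableEmbedding.subtype_coe (measurableSet_singleton _).compl
  have h5 := (hemb2.integrable_map_iff
      (g := fun x : E => f ‖x‖) (μ := μ.comap (Subtype.val : ({0}ᶜ : Set E) → E))).2 h4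
  rwa [hemb2.map_comap, Subtype.range_coe, MeasureTheory.restrict_compl_singleton] at h5

lemma hasFDerivAt_radial_rpow {E : Type*} [NormedAddCommGroup E] [InnerProductSpace ℝ E]
    (e s : ℝ) (hs : 0 < s) {x : E} (hx : x ≠ 0) :
    HasFDerivAt (fun y : E => (‖y‖ / s) ^ e)
      ((s ^ (-e) * e * ((‖x‖ ^ 2 : ℝ)) ^ (e / 2 - 1)) • innerSL ℝ x) x := by
  have key : ∀ y : E, (‖y‖ / s) ^ e = s ^ (-e) * ((‖y‖ ^ 2 : ℝ)) ^ (e / 2) := by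
    intro y
    rw [Real.div_rpow (norm_nonneg _) hs.le, Real.rpow_neg hs.le,
      ← Real.rpow_natCast ‖y‖ 2, ← Real.rpow_mul (norm_nonneg _),
      show ((2:ℕ):ℝ) * (e / 2) = e by push_cast; ring]
    ring
  simp_rw [key]
  have hx2 : (‖x‖ ^ 2 : ℝ) ≠ 0 := pow_ne_zero _ (norm_ne_zero_iff.2 hx)
  have h2 := ((hasStrictFDerivAt_norm_sq x).hasFDerivAt.rpow_const
    (p := e / 2) (Or.inl hx2)).const_mul (s ^ (-e))
  refine h2.congr_fderiv ?_
  ext y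
  simp [smul_smul]
  ring

lemma norm_fderiv_radial_rpow {E : Type*} [NormedAddCommGroup E] [InnerProductSpace ℝ E]
    (e s : ℝ) (hs : 0 < s) {x : E} (hx : x ≠ 0) :
    ‖fderiv ℝ (fun y : E => (‖y‖ / s) ^ e) x‖ = |e| * s ^ (-e) * ‖x‖ ^ (e - 1) := by
  rw [(hasFDerivAt_radial_rpow e s hs hx).fderiv, norm_smul, innerSL_apply_norm]
  have hxn : (0:ℝ) < ‖x‖ := norm_pos_iff.2 hx
  have : ((‖x‖ ^ 2 : ℝ)) ^ (e / 2 - 1) = ‖x‖ ^ (e - 2) := by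
    rw [← Real.rpow_natCast ‖x‖ 2, ← Real.rpow_mul (norm_nonneg _)]
    norm_num
    ring_nf
  rw [this, Real.norm_eq_abs, abs_mul, abs_mul, abs_of_nonneg (Real.rpow_nonneg hs.le _),
    abs_of_nonneg (Real.rpow_nonneg (norm_nonneg _) _),
    mul_assoc, mul_assoc, ← Real.rpow_add_one hxn.ne' (e - 2)]
  ring_nf

-- algebra helper: combine radial powers
lemma radial_alg {s : ℝ} (hs : 0 < s) (β p : ℝ) :
    ∀ (e a y : ℝ), 0 < y →
      y ^ a * (y ^ β * ((y / s) ^ e) ^ p) = s ^ (-(e * p)) * y ^ (a + β + e * p) := by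
  intro e a y hy
  rw [Real.div_rpow hy.le hs.le,
    Real.div_rpow (Real.rpow_nonneg hy.le e) (Real.rpow_nonneg hs.le e),
    ← Real.rpow_mul hy.le, ← Real.rpow_mul hs.le, Real.rpow_neg hs.le,
    Real.rpow_add hy, Real.rpow_add hy]
  field_simp

lemma radial_alg2 {s : ℝ} (hs : 0 < s) (β p : ℝ) :
    ∀ (e r : ℝ), 0 < r →
      r ^ (β + p) * (|e| * s ^ (-e) * r ^ (e - 1)) ^ p = |e| ^ p * (r ^ β * |(r / s) ^ e| ^ p) := by
  intro e r hr
  rw [abs_of_nonneg (Real.rpow_nonneg (div_nonneg hr.le hs.le) e),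
    Real.div_rpow hr.le hs.le,
    Real.div_rpow (Real.rpow_nonneg hr.le e) (Real.rpow_nonneg hs.le e),
    mul_rpow (mul_nonneg (abs_nonneg e) (Real.rpow_nonneg hs.le _)) (Real.rpow_nonneg hr.le _),
    mul_rpow (abs_nonneg e) (Real.rpow_nonneg hs.le _),
    ← Real.rpow_mul hr.le, ← Real.rpow_mul hs.le, ← Real.rpow_mul hr.le, ← Real.rpow_mul hs.le,
    show -e * p = -(e * p) by ring, Real.rpow_neg hs.le, Real.rpow_add hr,
    show (e - 1) * p = e * p - p by ring, Real.rpow_sub hr]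
  field_simp

end Aux

/-- The near-extremal test function for the sharp Hardy inequality on ℝ^n. -/
theorem stmt_14 (n : ℕ) (hn : 2 ≤ n) (p β : ℝ) (hβn : β < -(n : ℝ))
    (hp1 : 1 < p) (hpβ : -(n : ℝ) < p + β) (s : ℝ) (hs : 0 < s) (hs1 : s < 1)
    (δ : ℝ) (hδ : 0 < δ) (hδ1 : δ < 1)
    (c : ℝ → ℝ) (hc : ∀ t, c t = (|(n : ℝ) + β| + t) / p)
    (v : EuclideanSpace ℝ (Fin n) → ℝ)
    (hv : ∀ x, v x = if ‖x‖ ≤ s then (‖x‖ / s) ^ (c δ) else (‖x‖ / s) ^ (-(c (δ / 2)))) :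
    Integrable (fun x : EuclideanSpace ℝ (Fin n) => ‖x‖ ^ β * |v x| ^ p) ∧
    Integrable (fun x : EuclideanSpace ℝ (Fin n) => ‖x‖ ^ (β + p) * ‖fderiv ℝ v x‖ ^ p) ∧
    c δ ^ p * ∫ x : EuclideanSpace ℝ (Fin n), ‖x‖ ^ β * |v x| ^ p
      > ∫ x : EuclideanSpace ℝ (Fin n), ‖x‖ ^ (β + p) * ‖fderiv ℝ v x‖ ^ p := by
  classical
  have hp0 : (0:ℝ) < p := lt_trans one_pos hp1
  have hnβ : (n:ℝ) + β < 0 := by linarith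
  set c1 := c δ with hc1def
  set c2 := c (δ/2) with hc2def
  have hc1p : c1 * p = -((n:ℝ) + β) + δ := by
    rw [hc1def, hc δ, abs_of_neg hnβ, div_mul_cancel₀ _ hp0.ne']
  have hc2p : c2 * p = -((n:ℝ) + β) + δ/2 := by
    rw [hc2def, hc (δ/2), abs_of_neg hnβ, div_mul_cancel₀ _ hp0.ne']
  have hc1pos : 0 < c1 := by nlinarith
  have hc2pos : 0 < c2 := by nlinarith
  have hc21 : c2 < c1 := by nlinarith
  haveI : Nontrivial (EuclideanSpace ℝ (Fin n)) :=
    Module.nontrivial_of_finrank_pos (R := ℝ) (by rw [finrank_euclideanSpace_fin]; omega)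
  have hcast : ((n - 1 : ℕ) : ℝ) = (n:ℝ) - 1 := by
    rw [Nat.cast_sub (by omega : 1 ≤ n)]; norm_num
  -- integrability of the first integrand
  have int1 : Integrable (fun x : EuclideanSpace ℝ (Fin n) => ‖x‖ ^ β * |v x| ^ p) := by
    have hrw : (fun x : EuclideanSpace ℝ (Fin n) => ‖x‖ ^ β * |v x| ^ p)
        = fun x => (fun y : ℝ =>
            y ^ β * |if y ≤ s then (y / s) ^ c1 else (y / s) ^ (-c2)| ^ p) ‖x‖ := by
      funext x; rw [hv x]
    rw [hrw]
    have hOn : IntegrableOn (fun y : ℝ => y ^ (n - 1) *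
        (y ^ β * |if y ≤ s then (y / s) ^ c1 else (y / s) ^ (-c2)| ^ p)) (Ioi 0) := by
      rw [← Ioc_union_Ioi_eq_Ioi hs.le, integrableOn_union]
      constructor
      · have hint : IntegrableOn
            (fun y : ℝ => s ^ (-(c1 * p)) * y ^ (((n - 1 : ℕ) : ℝ) + β + c1 * p)) (Ioc 0 s) := by
          apply Integrable.const_mul
          refine ((intervalIntegral.integrableOn_Ioo_rpow_iff hs).2 ?_).congr_set_ae Ioo_ae_eq_Ioc.symm
          rw [hcast, hc1p]; linarith
        refine hint.congr_fun (fun y hy => ?_) measurableSet_Ioc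
        have hy0 : (0:ℝ) < y := hy.1
        simp only [if_pos hy.2]
        rw [abs_of_nonneg (Real.rpow_nonneg (div_nonneg hy0.le hs.le) _),
          ← Real.rpow_natCast y (n - 1)]
        exact (radial_alg hs β p c1 _ y hy0).symm
      · have ha2 : ((n - 1 : ℕ) : ℝ) + β + (-c2) * p < -1 := by
          have : (-c2) * p = ((n:ℝ) + β) - δ/2 := by rw [neg_mul, hc2p]; ring
          rw [hcast, this]; linarith
        have hint : IntegrableOn
            (fun y : ℝ => s ^ (-((-c2) * p)) * y ^ (((n - 1 : ℕ) : ℝ) + β + (-c2) * p)) (Ioi s) := by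
          exact (integrableOn_Ioi_rpow_of_lt ha2 hs).const_mul _
        refine hint.congr_fun (fun y hy => ?_) measurableSet_Ioi
        have hys : s < y := hy
        have hy0 : (0:ℝ) < y := lt_trans hs hys
        simp only [if_neg (not_le.2 hys)]
        rw [abs_of_nonneg (Real.rpow_nonneg (div_nonneg hy0.le hs.le) _),
          ← Real.rpow_natCast y (n - 1)]
        exact (radial_alg hs β p (-c2) _ y hy0).symm
    exact integrable_fun_norm_of_radial volume
      (by rw [finrank_euclideanSpace_fin]; exact hOn)
  -- a.e. identification of the gradient integrand
  have hae : (fun x : EuclideanSpace ℝ (Fin n) => ‖x‖ ^ (β + p) * ‖fderiv ℝ v x‖ ^ p)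
      =ᵐ[volume] (Metric.closedBall (0 : EuclideanSpace ℝ (Fin n)) s).piecewise
        (fun x => c1 ^ p * (‖x‖ ^ β * |v x| ^ p))
        (fun x => c2 ^ p * (‖x‖ ^ β * |v x| ^ p)) := by
    have hT : volume ((Metric.sphere (0 : EuclideanSpace ℝ (Fin n)) s ∪ {0}) :
        Set (EuclideanSpace ℝ (Fin n))) = 0 :=
      measure_union_null (Measure.addHaar_sphere _ _ _) (measure_singleton _)
    have h0 : ∀ᵐ x : EuclideanSpace ℝ (Fin n),
        x ∉ ((Metric.sphere (0 : EuclideanSpace ℝ (Fin n)) s ∪ {0}) :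
          Set (EuclideanSpace ℝ (Fin n))) := by
      rw [← measure_eq_zero_iff_ae_notMem]; exact hT
    filter_upwards [h0] with x hx
    have hx0 : x ≠ 0 := fun h => hx (Or.inr (by simp [h]))
    have hxs : ‖x‖ ≠ s := fun h => hx (Or.inl (by rwa [mem_sphere_zero_iff_norm]))
    have hxn : (0:ℝ) < ‖x‖ := norm_pos_iff.2 hx0
    rcases lt_or_gt_of_ne hxs with hlt | hgt
    · have hmem : x ∈ Metric.closedBall (0 : EuclideanSpace ℝ (Fin n)) s := by
        rw [Metric.mem_closedBall, dist_zero_right]; exact hlt.le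
      rw [Set.piecewise_eq_of_mem _ _ _ hmem]
      have hev : v =ᶠ[nhds x] fun y => (‖y‖ / s) ^ c1 := by
        have hop : IsOpen {y : EuclideanSpace ℝ (Fin n) | ‖y‖ < s} :=
          isOpen_lt continuous_norm continuous_const
        filter_upwards [hop.mem_nhds hlt] with y hy
        rw [hv y, if_pos (le_of_lt hy)]
      rw [hev.fderiv_eq, norm_fderiv_radial_rpow c1 s hs hx0,
        radial_alg2 hs β p c1 ‖x‖ hxn, abs_of_pos hc1pos, hv x, if_pos hlt.le]
    · have hmem : x ∉ Metric.closedBall (0 : EuclideanSpace ℝ (Fin n)) s := by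
        rw [Metric.mem_closedBall, dist_zero_right]; exact not_le.2 hgt
      rw [Set.piecewise_eq_of_notMem _ _ _ hmem]
      have hev : v =ᶠ[nhds x] fun y => (‖y‖ / s) ^ (-c2) := by
        have hop : IsOpen {y : EuclideanSpace ℝ (Fin n) | s < ‖y‖} :=
          isOpen_lt continuous_const continuous_norm
        filter_upwards [hop.mem_nhds hgt] with y hy
        rw [hv y, if_neg (not_le.2 hy)]
      rw [hev.fderiv_eq, norm_fderiv_radial_rpow (-c2) s hs hx0,
        radial_alg2 hs β p (-c2) ‖x‖ hxn, abs_neg, abs_of_pos hc2pos, hv x,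
        if_neg (not_le.2 hgt)]
  -- integrability of the piecewise majorant and of the gradient integrand
  have hWint : Integrable ((Metric.closedBall (0 : EuclideanSpace ℝ (Fin n)) s).piecewise
      (fun x => c1 ^ p * (‖x‖ ^ β * |v x| ^ p))
      (fun x => c2 ^ p * (‖x‖ ^ β * |v x| ^ p))) :=
    Integrable.piecewise measurableSet_closedBall
      (int1.const_mul (c1 ^ p)).integrableOn (int1.const_mul (c2 ^ p)).integrableOn
  have int2 : Integrable
      (fun x : EuclideanSpace ℝ (Fin n) => ‖x‖ ^ (β + p) * ‖fderiv ℝ v x‖ ^ p) :=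
    hWint.congr hae.symm
  refine ⟨int1, int2, ?_⟩
  -- compute/compare the integrals
  have hsplit : ∫ x : EuclideanSpace ℝ (Fin n), ‖x‖ ^ β * |v x| ^ p
      = (∫ x in Metric.closedBall (0 : EuclideanSpace ℝ (Fin n)) s, ‖x‖ ^ β * |v x| ^ p)
        + ∫ x in (Metric.closedBall (0 : EuclideanSpace ℝ (Fin n)) s)ᶜ, ‖x‖ ^ β * |v x| ^ p :=
    (integral_add_compl measurableSet_closedBall int1).symm
  have h2 : ∫ x : EuclideanSpace ℝ (Fin n), ‖x‖ ^ (β + p) * ‖fderiv ℝ v x‖ ^ p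
      = c1 ^ p * (∫ x in Metric.closedBall (0 : EuclideanSpace ℝ (Fin n)) s, ‖x‖ ^ β * |v x| ^ p)
        + c2 ^ p *
          ∫ x in (Metric.closedBall (0 : EuclideanSpace ℝ (Fin n)) s)ᶜ, ‖x‖ ^ β * |v x| ^ p := by
    rw [integral_congr_ae hae, ← integral_add_compl measurableSet_closedBall hWint]
    congr 1
    · rw [← integral_const_mul]
      exact setIntegral_congr_fun measurableSet_closedBall
        (fun x hx => Set.piecewise_eq_of_mem _ _ _ hx)
    · rw [← integral_const_mul]
      exact setIntegral_congr_fun measurableSet_closedBall.compl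
        (fun x hx => Set.piecewise_eq_of_notMem _ _ _ hx)
  have hBpos : 0 < ∫ x in (Metric.closedBall (0 : EuclideanSpace ℝ (Fin n)) s)ᶜ,
      ‖x‖ ^ β * |v x| ^ p := by
    rw [setIntegral_pos_iff_support_of_nonneg_ae
      (Filter.Eventually.of_forall fun x =>
        mul_nonneg (Real.rpow_nonneg (norm_nonneg _) _)
          (Real.rpow_nonneg (abs_nonneg _) _)) int1.integrableOn]
    have hsub : (Metric.closedBall (0 : EuclideanSpace ℝ (Fin n)) s)ᶜ ⊆
        Function.support (fun x => ‖x‖ ^ β * |v x| ^ p) ∩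
          (Metric.closedBall (0 : EuclideanSpace ℝ (Fin n)) s)ᶜ := by
      intro x hx
      refine ⟨?_, hx⟩
      have hgt : s < ‖x‖ := by
        rw [Set.mem_compl_iff, Metric.mem_closedBall, dist_zero_right] at hx
        exact not_le.1 hx
      have hxn : (0:ℝ) < ‖x‖ := lt_trans hs hgt
      have hvpos : 0 < |v x| := by
        rw [hv x, if_neg (not_le.2 hgt)]
        exact abs_pos.2 (ne_of_gt (Real.rpow_pos_of_pos (div_pos hxn hs) _))
      exact ne_of_gt (mul_pos (Real.rpow_pos_of_pos hxn _) (Real.rpow_pos_of_pos hvpos _))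
    refine lt_of_lt_of_le ?_ (measure_mono hsub)
    refine (Metric.isClosed_closedBall.isOpen_compl).measure_pos volume ?_
    obtain ⟨y, hy⟩ := exists_ne (0 : EuclideanSpace ℝ (Fin n))
    have hyn : ‖y‖ ≠ 0 := norm_ne_zero_iff.2 hy
    refine ⟨((s + 1) * ‖y‖⁻¹) • y, ?_⟩
    have hnm : ‖((s + 1) * ‖y‖⁻¹) • y‖ = s + 1 := by
      rw [norm_smul, Real.norm_eq_abs, abs_mul, abs_inv, abs_norm,
        abs_of_pos (by linarith : (0:ℝ) < s + 1), mul_assoc, inv_mul_cancel₀ hyn, mul_one]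
    simp only [Set.mem_compl_iff, Metric.mem_closedBall, dist_zero_right, hnm]
    linarith
  have hlt : c2 ^ p < c1 ^ p := Real.rpow_lt_rpow hc2pos.le hc21 hp0
  have hA : (0:ℝ) ≤ ∫ x in Metric.closedBall (0 : EuclideanSpace ℝ (Fin n)) s,
      ‖x‖ ^ β * |v x| ^ p :=
    setIntegral_nonneg measurableSet_closedBall
      (fun x _ => mul_nonneg (Real.rpow_nonneg (norm_nonneg _) _)
        (Real.rpow_nonneg (abs_nonneg _) _))
  rw [h2, hsplit]
  nlinarith [mul_pos (sub_pos.2 hlt) hBpos]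
end
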